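/- arXiv:0811.3559 — 7 statements merged into one kernel-verified Lean document; each statement's English description precedes it below -/
import Mathlib

section
/- Let k > 0 and define φ₁(x) = x + k + 1. Then φ₁ is a solution of the homogeneous Sturm–Liouville equation with spectral parameter λ = 0: for all x ∈ (0,∞), -(p_k·φ₁')'(x) + q_k(x)·φ₁(x) = 0. -/
/-!
With `φ₁' = 1` the equation reduces to `p_k' = q_k · φ₁`. The quotient rule gives
`p_k' = x^k e^(-x) ((k + 1 - x)(x + k) - 2x) / (x + k)^3`, and the factorisation
`(k + 1 - x)(x + k) - 2x = (k - x)(x + k + 1)` turns `p_k'` into `q_k · (x + k + 1)`.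
-/

open Real

namespace X1Laguerre

noncomputable def p (k t : ℝ) : ℝ := t ^ (k + 1) * exp (-t) / (t + k) ^ 2

noncomputable def q (k t : ℝ) : ℝ := -((t - k) * t ^ k * exp (-t) / (t + k) ^ 3)

lemma hasDerivAt_rpow_add_one_mul_exp_neg {k x : ℝ} (hx : x ≠ 0) :
    HasDerivAt (fun t => t ^ (k + 1) * exp (-t)) ((k + 1 - x) * x ^ k * exp (-x)) x := by
  have hpow : HasDerivAt (fun t : ℝ => t ^ (k + 1)) ((k + 1) * x ^ k) x := by
    simpa using hasDerivAt_rpow_const (p := k + 1) (Or.inl hx)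
  have hexp : HasDerivAt (fun t : ℝ => exp (-t)) (-exp (-x)) x := by
    simpa using (hasDerivAt_neg x).exp
  refine (hpow.mul hexp).congr_deriv ?_
  rw [rpow_add_one hx]
  ring

lemma hasDerivAt_p {k x : ℝ} (hx : x ≠ 0) (hxk : x + k ≠ 0) :
    HasDerivAt (p k) (q k x * (x + k + 1)) x := by
  have hsq : HasDerivAt (fun t : ℝ => (t + k) ^ 2) (2 * (x + k)) x := by
    simpa using ((hasDerivAt_id x).add_const k).fun_pow 2
  refine ((hasDerivAt_rpow_add_one_mul_exp_neg hx).div hsq (pow_ne_zero 2 hxk)).congr_deriv ?_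
  rw [q, rpow_add_one hx]
  field_simp
  ring

end X1Laguerre

/-- For `k > 0`, `φ₁(x) = x + k + 1` solves the homogeneous Sturm–Liouville
equation `-(p_k·φ₁')'(x) + q_k(x)·φ₁(x) = 0` on `(0,∞)`, where
`p_k(x) = x^(k+1) e^(-x)/(x+k)^2` and `q_k(x) = -(x-k) x^k e^(-x)/(x+k)^3`. -/
theorem x1_laguerre_phi1_solution (k : ℝ) (hk : 0 < k)
    (φ₁ : ℝ → ℝ) (hφ₁ : ∀ x : ℝ, φ₁ x = x + k + 1)
    (x : ℝ) (hx : x ∈ Set.Ioi (0 : ℝ)) :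
    -(deriv (fun t : ℝ => (t ^ (k + 1) * Real.exp (-t) / (t + k) ^ 2) * deriv φ₁ t) x)
        + (-((x - k) * x ^ k * Real.exp (-x) / (x + k) ^ 3)) * φ₁ x = 0 := by
  have hx₀ : 0 < x := hx
  have hφ₁' : deriv φ₁ = fun _ => 1 := by
    rw [funext hφ₁]
    funext t
    simp
  have hp : deriv (X1Laguerre.p k) x = X1Laguerre.q k x * φ₁ x := by
    rw [(X1Laguerre.hasDerivAt_p hx₀.ne' (by positivity)).deriv, hφ₁ x]
  simp only [hφ₁', mul_one]
  change -deriv (X1Laguerre.p k) x + X1Laguerre.q k x * φ₁ x = 0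
  rw [hp]
  ring
end

section
/- Let k > 0, φ₁(x) = x + k + 1, and φ₂(x) = φ₁(x) · ∫₁^x (t+k)² e^t / ((t+k+1)² t^{k+1}) dt. If y : ℝ → ℝ is twice differentiable on (0,∞) and satisfies -(p_k·y')'(x) + q_k(x)·y(x) = 0 for all x ∈ (0,∞), then there exist constants c₁, c₂ ∈ ℝ such that y(x) = c₁ φ₁(x) + c₂ φ₂(x) for all x ∈ (0,∞); that is, {φ₁, φ₂} is a fundamental system of solutions of the homogeneous Sturm–Liouville equation. -/
/-!
Reduction of order. For two solutions `φ`, `y` of `(p u')' = q u`, the quantity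
`p (φ y' - y φ')` has derivative `φ (p y')' - y (p φ')' = 0`, so it is a constant `w`;
where `φ ≠ 0` this gives `(y / φ)' = w / (p φ²)`, hence
`y = (y a / φ a) φ + w φ ∫ₐ 1 / (p φ²)`. For the Laguerre-type coefficients, `φ₁ = x + k + 1`
solves the equation because `p_k' = q_k φ₁`, and `1 / (p_k φ₁²)` is exactly the integrand of `φ₂`.
-/

open Real Set MeasureTheory intervalIntegral

lemma Set.OrdConnected.eq_of_hasDerivAt_zero {s : Set ℝ} (hs : IsOpen s) (hs' : s.OrdConnected)
    {F : ℝ → ℝ} (hF : ∀ x ∈ s, HasDerivAt F 0 x) {x a : ℝ} (hx : x ∈ s) (ha : a ∈ s) :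
    F x = F a :=
  hs.is_const_of_deriv_eq_zero hs'.isPreconnected
    (fun t ht => (hF t ht).differentiableAt.differentiableWithinAt)
    (fun t ht => (hF t ht).deriv) hx ha

namespace SturmLiouville

noncomputable def wronskian (p φ y : ℝ → ℝ) (x : ℝ) : ℝ :=
  p x * (φ x * deriv y x - y x * deriv φ x)

variable {s : Set ℝ} {p q φ y : ℝ → ℝ}

lemma hasDerivAt_wronskian {x : ℝ} (hφ : DifferentiableAt ℝ φ x)
    (hpφ : HasDerivAt (fun t => p t * deriv φ t) (q x * φ x) x) (hy : DifferentiableAt ℝ y x)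
    (hpy : HasDerivAt (fun t => p t * deriv y t) (q x * y x) x) :
    HasDerivAt (wronskian p φ y) 0 x := by
  have hW : wronskian p φ y = fun t => φ t * (p t * deriv y t) - y t * (p t * deriv φ t) := by
    funext t
    simp only [wronskian]
    ring
  rw [hW]
  exact ((hφ.hasDerivAt.mul hpy).sub (hy.hasDerivAt.mul hpφ)).congr_deriv (by ring)

theorem eq_wronskian_of_mem (hs : IsOpen s) (hs' : s.OrdConnected)
    (hφ : ∀ x ∈ s, DifferentiableAt ℝ φ x)
    (hpφ : ∀ x ∈ s, HasDerivAt (fun t => p t * deriv φ t) (q x * φ x) x)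
    (hy : ∀ x ∈ s, DifferentiableAt ℝ y x)
    (hpy : ∀ x ∈ s, HasDerivAt (fun t => p t * deriv y t) (q x * y x) x)
    {x a : ℝ} (hx : x ∈ s) (ha : a ∈ s) :
    wronskian p φ y x = wronskian p φ y a :=
  hs'.eq_of_hasDerivAt_zero hs
    (fun t ht => hasDerivAt_wronskian (hφ t ht) (hpφ t ht) (hy t ht) (hpy t ht)) hx ha

lemma hasDerivAt_div_wronskian {x : ℝ} (hφ : DifferentiableAt ℝ φ x) (hy : DifferentiableAt ℝ y x)
    (hp : p x ≠ 0) (hφ0 : φ x ≠ 0) :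
    HasDerivAt (fun t => y t / φ t) (wronskian p φ y x * (p x * φ x ^ 2)⁻¹) x :=
  (hy.hasDerivAt.div hφ.hasDerivAt hφ0).congr_deriv (by
    simp only [wronskian]
    field_simp)

theorem eq_mul_add_mul_integral (hs : IsOpen s) (hs' : s.OrdConnected)
    (hp : ContinuousOn p s) (hp0 : ∀ x ∈ s, p x ≠ 0)
    (hφ : ∀ x ∈ s, DifferentiableAt ℝ φ x) (hφ0 : ∀ x ∈ s, φ x ≠ 0)
    (hpφ : ∀ x ∈ s, HasDerivAt (fun t => p t * deriv φ t) (q x * φ x) x)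
    (hy : ∀ x ∈ s, DifferentiableAt ℝ y x)
    (hpy : ∀ x ∈ s, HasDerivAt (fun t => p t * deriv y t) (q x * y x) x)
    {a : ℝ} (ha : a ∈ s) :
    ∀ x ∈ s, y x = y a / φ a * φ x +
      wronskian p φ y a * (φ x * ∫ t in a..x, (p t * φ t ^ 2)⁻¹) := by
  set w := wronskian p φ y a
  have hr : ContinuousOn (fun t => (p t * φ t ^ 2)⁻¹) s :=
    (hp.mul ((continuousOn_of_forall_continuousAt fun t ht => (hφ t ht).continuousAt).pow 2)).inv₀
      fun t ht => mul_ne_zero (hp0 t ht) (pow_ne_zero 2 (hφ0 t ht))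
  have hg : ∀ x ∈ s, HasDerivAt (fun t => y t / φ t - w * ∫ u in a..t, (p u * φ u ^ 2)⁻¹) 0 x := by
    intro x hx
    have hint : HasDerivAt (fun t => ∫ u in a..t, (p u * φ u ^ 2)⁻¹) (p x * φ x ^ 2)⁻¹ x :=
      integral_hasDerivAt_right ((hr.mono (hs'.uIcc_subset ha hx)).intervalIntegrable)
        (hr.stronglyMeasurableAtFilter hs x hx) (hr.continuousAt (hs.mem_nhds hx))
    refine ((hasDerivAt_div_wronskian (hφ x hx) (hy x hx) (hp0 x hx) (hφ0 x hx)).sub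
      (hint.const_mul w)).congr_deriv ?_
    rw [eq_wronskian_of_mem hs hs' hφ hpφ hy hpy hx ha, sub_self]
  intro x hx
  have hconst := hs'.eq_of_hasDerivAt_zero hs hg hx ha
  simp only [integral_same, mul_zero, sub_zero] at hconst
  rw [sub_eq_iff_eq_add, div_eq_iff (hφ0 x hx)] at hconst
  rw [hconst]
  ring

end SturmLiouville

namespace Laguerre

noncomputable def p (k x : ℝ) : ℝ := x ^ (k + 1) * exp (-x) / (x + k) ^ 2

noncomputable def q (k x : ℝ) : ℝ := -((x - k) * x ^ k * exp (-x) / (x + k) ^ 3)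

variable {k x : ℝ}

lemma p_ne_zero (hk : 0 < k) (hx : 0 < x) : p k x ≠ 0 := by
  unfold p
  positivity

lemma hasDerivAt_p (hk : 0 < k) (hx : 0 < x) :
    HasDerivAt (p k) (q k x * (x + k + 1)) x := by
  have hxk : x + k ≠ 0 := by positivity
  have h := ((hasDerivAt_rpow_const (p := k + 1) (Or.inl hx.ne')).mul
    (hasDerivAt_neg x).exp).div (((hasDerivAt_id x).add_const k).pow 2) (pow_ne_zero 2 hxk)
  simp only [Pi.mul_apply, Pi.pow_apply, id] at h
  refine h.congr_deriv ?_
  rw [add_sub_cancel_right, rpow_add hx, rpow_one]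
  simp only [q]
  field_simp
  ring

lemma inv_p_mul_sq (x : ℝ) :
    (p k x * (x + k + 1) ^ 2)⁻¹ = (x + k) ^ 2 * exp x / ((x + k + 1) ^ 2 * x ^ (k + 1)) := by
  simp only [p, div_eq_mul_inv, mul_inv, inv_inv, exp_neg]
  ring

end Laguerre

open Laguerre SturmLiouville in
/-- For `k > 0`, the pair `φ₁(x) = x + k + 1` and
`φ₂(x) = (x+k+1) · ∫₁^x (t+k)² e^t / ((t+k+1)² t^(k+1)) dt` is a fundamental
system for the homogeneous Sturm–Liouville equation: every function `y` twice
differentiable on `(0,∞)` satisfying `-(p_k·y')'(x) + q_k(x)·y(x) = 0` on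
`(0,∞)` is of the form `y = c₁ φ₁ + c₂ φ₂` on `(0,∞)`, where
`p_k(x) = x^(k+1) e^(-x)/(x+k)^2` and `q_k(x) = -(x-k) x^k e^(-x)/(x+k)^3`. -/
theorem x1_laguerre_fundamental_system (k : ℝ) (hk : 0 < k)
    (φ₁ φ₂ : ℝ → ℝ) (hφ₁ : ∀ x : ℝ, φ₁ x = x + k + 1)
    (hφ₂ : ∀ x : ℝ, φ₂ x = (x + k + 1) *
      ∫ t in (1 : ℝ)..x, (t + k) ^ 2 * Real.exp t / ((t + k + 1) ^ 2 * t ^ (k + 1)))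
    (y : ℝ → ℝ)
    (hy : ∀ x ∈ Set.Ioi (0 : ℝ), DifferentiableAt ℝ y x)
    (hy' : ∀ x ∈ Set.Ioi (0 : ℝ), DifferentiableAt ℝ (deriv y) x)
    (heq : ∀ x ∈ Set.Ioi (0 : ℝ),
      -(deriv (fun t : ℝ => (t ^ (k + 1) * Real.exp (-t) / (t + k) ^ 2) * deriv y t) x)
        + (-((x - k) * x ^ k * Real.exp (-x) / (x + k) ^ 3)) * y x = 0) :
    ∃ c₁ c₂ : ℝ, ∀ x ∈ Set.Ioi (0 : ℝ), y x = c₁ * φ₁ x + c₂ * φ₂ x := by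
  have hpφ₁ : ∀ x ∈ Ioi (0 : ℝ),
      HasDerivAt (fun t => p k t * deriv (fun t => t + k + 1) t) (q k x * (x + k + 1)) x := by
    intro x hx
    simpa using hasDerivAt_p hk hx
  have hpy : ∀ x ∈ Ioi (0 : ℝ), HasDerivAt (fun t => p k t * deriv y t) (q k x * y x) x := by
    intro x hx
    have hdiff : DifferentiableAt ℝ (fun t => p k t * deriv y t) x :=
      (hasDerivAt_p hk hx).differentiableAt.mul (hy' x hx)
    have hsol : deriv (fun t => p k t * deriv y t) x = q k x * y x := by
      have hode := heq x hx
      simp only [p, q] at hode ⊢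
      linarith
    exact hsol ▸ hdiff.hasDerivAt
  have hrep := eq_mul_add_mul_integral isOpen_Ioi ordConnected_Ioi
    (fun x hx => (hasDerivAt_p hk hx).continuousAt.continuousWithinAt)
    (fun x hx => p_ne_zero hk hx) (fun x _ => by fun_prop)
    (fun x (hx : 0 < x) => by positivity)
    hpφ₁ hy hpy (mem_Ioi.mpr one_pos)
  refine ⟨y 1 / (1 + k + 1), wronskian (p k) (fun t => t + k + 1) y 1, fun x hx => ?_⟩
  rw [hrep x hx, hφ₁, hφ₂]
  simp only [inv_p_mul_sq]
end

section
/- Let k > 0 and φ₂(x) = (x+k+1) · ∫₁^x (t+k)² e^t / ((t+k+1)² t^{k+1}) dt. Then φ₂ does not belong to L²([1,∞); w_k); that is, ∫₁^∞ φ₂(x)² · x^k e^{-x}/(x+k)² dx = ∞. -/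
/-!
Since `(t + k)/(t + k + 1) ≥ 1/2` for `t ≥ 1`, the integrand defining `φ₂` is at least
`e^t / (4 t^(k+1))`, and integrating over the last unit interval `[x - 1, x]` gives
`φ₂(x) ≥ (x + k) e^(x-1) / (4 x^(k+1))`. Hence
`φ₂(x)² w_k(x) ≥ e^(-2) e^x / (16 x^(k+2))`, which tends to infinity, so the weighted
integral over `[1, ∞)` diverges.
-/

open Real Set MeasureTheory intervalIntegral Filter

lemma lintegral_Ici_ofReal_eq_top_of_tendsto_atTop {f : ℝ → ℝ} (a : ℝ)
    (hf : Tendsto f atTop atTop) : ∫⁻ x in Ici a, ENNReal.ofReal (f x) = ⊤ := by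
  obtain ⟨b, hb⟩ := eventually_atTop.1 (hf.eventually_ge_atTop 1)
  refine top_le_iff.1 ?_
  calc (⊤ : ENNReal) = ∫⁻ _ in Ici (max a b), 1 := by simp [Real.volume_Ici]
    _ ≤ ∫⁻ x in Ici (max a b), ENNReal.ofReal (f x) :=
        setLIntegral_mono' measurableSet_Ici fun x hx =>
          ENNReal.one_le_ofReal.2 (hb x (le_of_max_le_right hx))
    _ ≤ _ := lintegral_mono_set (Ici_subset_Ici.2 (le_max_left a b))

/-- The integrand `1 / (φ₁² p_k)` in the definition of `φ₂`. -/
noncomputable def phi2Integrand (k t : ℝ) : ℝ :=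
  (t + k) ^ 2 * exp t / ((t + k + 1) ^ 2 * t ^ (k + 1))

lemma phi2Integrand_nonneg (k : ℝ) {t : ℝ} (ht : 0 ≤ t) : 0 ≤ phi2Integrand k t := by
  unfold phi2Integrand; positivity

lemma continuousOn_phi2Integrand {k : ℝ} (hk : 0 ≤ k) :
    ContinuousOn (phi2Integrand k) (Ioi 0) := by
  intro t (ht : 0 < t)
  refine ContinuousAt.continuousWithinAt (ContinuousAt.div (by fun_prop) ?_ (by positivity))
  exact (continuousAt_id.add continuousAt_const).add continuousAt_const |>.pow 2 |>.mul
    (continuousAt_rpow_const t (k + 1) (Or.inl ht.ne'))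

lemma exp_div_rpow_le_four_mul_phi2Integrand {k t : ℝ} (hk : 0 ≤ k) (ht : 1 ≤ t) :
    exp t / t ^ (k + 1) ≤ 4 * phi2Integrand k t := by
  have hratio : 1 / 4 ≤ ((t + k) / (t + k + 1)) ^ 2 := by
    rw [div_pow, le_div_iff₀ (by positivity)]
    nlinarith
  have hsplit : phi2Integrand k t = ((t + k) / (t + k + 1)) ^ 2 * (exp t / t ^ (k + 1)) := by
    unfold phi2Integrand
    rw [div_pow, div_mul_div_comm]
  rw [hsplit]
  nlinarith [show 0 ≤ exp t / t ^ (k + 1) by positivity]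

lemma exp_div_rpow_le_four_mul_integral_phi2Integrand {k x : ℝ} (hk : 0 ≤ k) (hx : 2 ≤ x) :
    exp (x - 1) / x ^ (k + 1) ≤ 4 * ∫ t in (1 : ℝ)..x, phi2Integrand k t := by
  have hint : ∀ a b, 1 ≤ a → a ≤ b → IntervalIntegrable (phi2Integrand k) volume a b :=
    fun a b ha hab => ((continuousOn_phi2Integrand hk).mono fun t ht =>
      show 0 < t by linarith [ht.1]).intervalIntegrable_of_Icc hab
  have hhead : 0 ≤ ∫ t in (1 : ℝ)..(x - 1), phi2Integrand k t :=
    integral_nonneg (by linarith) fun t ht => phi2Integrand_nonneg k (by linarith [ht.1])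
  have htail : exp (x - 1) / x ^ (k + 1) ≤ ∫ t in (x - 1)..x, 4 * phi2Integrand k t := by
    have := integral_mono_on (by linarith) intervalIntegrable_const
      ((hint (x - 1) x (by linarith) (by linarith)).const_mul 4) fun t ht =>
        (div_le_div₀ (exp_pos t).le (exp_le_exp.2 ht.1) (rpow_pos_of_pos (by linarith [ht.1]) _)
          (rpow_le_rpow (by linarith [ht.1]) ht.2 (by positivity))).trans
        (exp_div_rpow_le_four_mul_phi2Integrand hk (by linarith [ht.1]))
    simpa using this
  rw [intervalIntegral.integral_const_mul] at htail
  rw [← integral_add_adjacent_intervals (hint 1 (x - 1) le_rfl (by linarith))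
    (hint (x - 1) x (by linarith) (by linarith))]
  linarith

lemma exp_div_rpow_le_sq_mul_laguerreWeight {k x I : ℝ} (hk : 0 ≤ k) (hx : 0 < x)
    (hI : exp (x - 1) / x ^ (k + 1) ≤ 4 * I) :
    exp (-2) / 16 * (exp x / x ^ (k + 2)) ≤
      ((x + k + 1) * I) ^ 2 * (x ^ k * exp (-x) / (x + k) ^ 2) := by
  have hpow : (x ^ (k + 1)) ^ 2 = x ^ (k + 2) * x ^ k := by
    rw [← rpow_natCast, ← rpow_mul hx.le, ← rpow_add hx]; ring_nf
  have hexp : exp (x - 1) ^ 2 * exp (-x) = exp (-2) * exp x := by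
    rw [← exp_nat_mul, ← exp_add, ← exp_add]; ring_nf
  calc exp (-2) / 16 * (exp x / x ^ (k + 2))
      = ((x + k) * (exp (x - 1) / x ^ (k + 1) / 4)) ^ 2 * (x ^ k * exp (-x) / (x + k) ^ 2) := by
        field_simp
        rw [hpow, ← hexp]
        ring
    _ ≤ ((x + k + 1) * I) ^ 2 * (x ^ k * exp (-x) / (x + k) ^ 2) := by
        gcongr (?_ * ?_) ^ 2 * _
        · linarith
        · linarith

/-- For `k > 0`, the second solution
`φ₂(x) = (x+k+1) · ∫₁^x (t+k)² e^t / ((t+k+1)² t^(k+1)) dt` is not in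
`L²([1,∞); w_k)` with `w_k(x) = x^k e^(-x)/(x+k)^2`; that is,
`∫₁^∞ φ₂(x)² · x^k e^(-x)/(x+k)² dx = ∞`. -/
theorem x1_laguerre_phi2_not_L2_at_infinity (k : ℝ) (hk : 0 < k)
    (φ₂ : ℝ → ℝ)
    (hφ₂ : ∀ x : ℝ, φ₂ x = (x + k + 1) *
      ∫ t in (1 : ℝ)..x, (t + k) ^ 2 * Real.exp t / ((t + k + 1) ^ 2 * t ^ (k + 1))) :
    ∫⁻ x in Set.Ici (1 : ℝ),
      ENNReal.ofReal (φ₂ x ^ 2 * (x ^ k * Real.exp (-x) / (x + k) ^ 2)) = ⊤ := by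
  refine lintegral_Ici_ofReal_eq_top_of_tendsto_atTop 1 (tendsto_atTop_mono' atTop ?_
    ((tendsto_exp_div_rpow_atTop (k + 2)).const_mul_atTop (by positivity : 0 < exp (-2) / 16)))
  filter_upwards [eventually_ge_atTop 2] with x hx
  rw [hφ₂ x]
  exact exp_div_rpow_le_sq_mul_laguerreWeight hk.le (by linarith)
    (exp_div_rpow_le_four_mul_integral_phi2Integrand hk.le hx)
end

section
/- Let 0 < k < 1 and φ₂(x) = (x+k+1) · ∫₁^x (t+k)² e^t / ((t+k+1)² t^{k+1}) dt. Then φ₂ belongs to L²((0,1]; w_k); that is, ∫₀^1 φ₂(x)² · x^k e^{-x}/(x+k)² dx < ∞. (Consequently both solutions φ₁, φ₂ are square integrable against w_k near 0, i.e. the endpoint 0 is in the limit-circle case.) -/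
open Real Set MeasureTheory intervalIntegral

/-!
Near `0` the integrand of `φ₂` is at most `e · t^(-(k+1))`, so `|φ₂(x)| = O(x^(-k))`.
Since `w_k(x) = O(x^k)` there, `φ₂² w_k = O(x^(-k))`, which is integrable at `0` because `k < 1`.
-/

theorem ContinuousOn.continuousOn_primitive_of_isOpen {E : Type*} [NormedAddCommGroup E]
    [NormedSpace ℝ E] [CompleteSpace E] {f : ℝ → E} {s : Set ℝ} (hf : ContinuousOn f s)
    (hs : IsOpen s) (hs' : s.OrdConnected) {a : ℝ} (ha : a ∈ s) :
    ContinuousOn (fun x => ∫ t in a..x, f t) s := by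
  intro x hx
  have hint : IntervalIntegrable f volume a x :=
    (hf.mono (hs'.uIcc_subset ha hx)).intervalIntegrable
  exact (integral_hasDerivAt_right hint (hf.stronglyMeasurableAtFilter hs x hx)
    (hf.continuousAt (hs.mem_nhds hx))).continuousAt.continuousWithinAt

theorem integral_rpow_neg_sub_one_le {k x : ℝ} (hk : 0 < k) (hx : 0 < x) :
    ∫ t in x..1, t ^ (-(k + 1)) ≤ x ^ (-k) / k := by
  have h0 : (0 : ℝ) ∉ uIcc x 1 := fun h =>
    lt_irrefl (0 : ℝ) (ordConnected_Ioi.uIcc_subset (mem_Ioi.2 hx) (mem_Ioi.2 one_pos) h)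
  rw [integral_rpow (Or.inr ⟨by linarith, h0⟩), show -(k + 1) + 1 = -k by ring, one_rpow,
    div_neg, ← neg_div, neg_sub]
  gcongr
  linarith

/-- The integrand `1 / (φ₁² p_k)` of the reduction-of-order formula for `φ₂`. -/
noncomputable def laguerrePhi2Integrand (k t : ℝ) : ℝ :=
  (t + k) ^ 2 * exp t / ((t + k + 1) ^ 2 * t ^ (k + 1))

section
variable {k t : ℝ}

theorem laguerrePhi2Integrand_nonneg (hk : 0 ≤ k) (ht : 0 ≤ t) :
    0 ≤ laguerrePhi2Integrand k t := by
  unfold laguerrePhi2Integrand; positivity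

theorem continuousOn_laguerrePhi2Integrand (hk : 0 ≤ k) :
    ContinuousOn (laguerrePhi2Integrand k) (Ioi 0) := by
  refine ContinuousOn.div (by fun_prop) ?_ fun t (ht : 0 < t) => by positivity
  exact (continuous_id.add continuous_const).add continuous_const |>.pow 2 |>.continuousOn.mul
    (continuousOn_id.rpow_const fun t ht => Or.inl ht.ne')

theorem laguerrePhi2Integrand_le (hk : 0 ≤ k) (ht : 0 < t) (ht1 : t ≤ 1) :
    laguerrePhi2Integrand k t ≤ exp 1 * t ^ (-(k + 1)) := by
  rw [laguerrePhi2Integrand, div_le_iff₀ (by positivity), rpow_neg ht.le]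
  calc (t + k) ^ 2 * exp t ≤ (t + k + 1) ^ 2 * exp 1 := by
        gcongr ?_ ^ 2 * exp ?_
        linarith
    _ = exp 1 * (t ^ (k + 1))⁻¹ * ((t + k + 1) ^ 2 * t ^ (k + 1)) := by
        field_simp

theorem abs_integral_laguerrePhi2Integrand_le (hk : 0 < k) {x : ℝ} (hx : 0 < x) (hx1 : x ≤ 1) :
    |∫ t in (1 : ℝ)..x, laguerrePhi2Integrand k t| ≤ exp 1 / k * x ^ (-k) := by
  have hcont := continuousOn_laguerrePhi2Integrand hk.le
  have hsub : uIcc x 1 ⊆ Ioi 0 := ordConnected_Ioi.uIcc_subset (mem_Ioi.2 hx) (mem_Ioi.2 one_pos)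
  rw [integral_symm, abs_neg, abs_of_nonneg (integral_nonneg hx1 fun t ht =>
    laguerrePhi2Integrand_nonneg hk.le (hx.le.trans ht.1))]
  calc ∫ t in x..1, laguerrePhi2Integrand k t ≤ ∫ t in x..1, exp 1 * t ^ (-(k + 1)) :=
        integral_mono_on hx1 (hcont.mono hsub).intervalIntegrable
          ((continuousOn_const.mul (continuousOn_id.rpow_const fun t ht =>
            Or.inl (hsub ht).ne')).intervalIntegrable)
          fun t ht => laguerrePhi2Integrand_le hk.le (hx.trans_le ht.1) ht.2
    _ ≤ exp 1 * (x ^ (-k) / k) := by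
        rw [intervalIntegral.integral_const_mul]
        exact mul_le_mul_of_nonneg_left (integral_rpow_neg_sub_one_le hk hx) (exp_pos 1).le
    _ = exp 1 / k * x ^ (-k) := by ring

theorem laguerrePhi2_sq_mul_weight_le (hk : 0 < k) {x : ℝ} (hx : 0 < x) (hx1 : x ≤ 1) :
    ((x + k + 1) * ∫ t in (1 : ℝ)..x, laguerrePhi2Integrand k t) ^ 2 *
        (x ^ k * exp (-x) / (x + k) ^ 2) ≤ ((k + 1) * exp 1 / k ^ 2) ^ 2 * x ^ (-k) := by
  set F := ∫ t in (1 : ℝ)..x, laguerrePhi2Integrand k t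
  have hxk : 0 < x + k := by linarith
  have hF : F ^ 2 ≤ (exp 1 / k * x ^ (-k)) ^ 2 :=
    sq_le_sq' (neg_le_of_abs_le (abs_integral_laguerrePhi2Integrand_le hk hx hx1))
      (le_of_abs_le (abs_integral_laguerrePhi2Integrand_le hk hx hx1))
  have hratio : (x + k + 1) / (x + k) ≤ (k + 1) / k := by
    rw [div_le_div_iff₀ hxk hk]; nlinarith
  have hpow : (x ^ (-k)) ^ 2 * x ^ k = x ^ (-k) := by
    rw [sq, mul_assoc, ← rpow_add hx, ← rpow_add hx]; ring_nf
  calc ((x + k + 1) * F) ^ 2 * (x ^ k * exp (-x) / (x + k) ^ 2)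
      = ((x + k + 1) / (x + k)) ^ 2 * exp (-x) * (F ^ 2 * x ^ k) := by
        field_simp
    _ ≤ ((k + 1) / k) ^ 2 * 1 * ((exp 1 / k * x ^ (-k)) ^ 2 * x ^ k) := by
        gcongr
        exact exp_le_one_iff.2 (by linarith)
    _ = ((k + 1) * exp 1 / k ^ 2) ^ 2 * ((x ^ (-k)) ^ 2 * x ^ k) := by ring
    _ = ((k + 1) * exp 1 / k ^ 2) ^ 2 * x ^ (-k) := by rw [hpow]

end

/-- For `0 < k < 1`, the second solution
`φ₂(x) = (x+k+1) · ∫₁^x (t+k)² e^t / ((t+k+1)² t^(k+1)) dt` belongs to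
`L²((0,1]; w_k)` with `w_k(x) = x^k e^(-x)/(x+k)^2`; that is,
`∫₀^1 φ₂(x)² · x^k e^(-x)/(x+k)² dx < ∞` (the limit-circle case at `0`). -/
theorem x1_laguerre_phi2_L2_at_zero (k : ℝ) (hk : 0 < k) (hk1 : k < 1)
    (φ₂ : ℝ → ℝ)
    (hφ₂ : ∀ x : ℝ, φ₂ x = (x + k + 1) *
      ∫ t in (1 : ℝ)..x, (t + k) ^ 2 * Real.exp t / ((t + k + 1) ^ 2 * t ^ (k + 1))) :
    IntegrableOn
      (fun x : ℝ => φ₂ x ^ 2 * (x ^ k * Real.exp (-x) / (x + k) ^ 2))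
      (Set.Ioc (0 : ℝ) 1) := by
  have hφ : φ₂ = fun x => (x + k + 1) * ∫ t in (1 : ℝ)..x, laguerrePhi2Integrand k t :=
    funext hφ₂
  have hφ_cont : ContinuousOn φ₂ (Ioi 0) := hφ ▸ (continuousOn_id.add continuousOn_const
    |>.add continuousOn_const).mul ((continuousOn_laguerrePhi2Integrand hk.le)
      |>.continuousOn_primitive_of_isOpen isOpen_Ioi ordConnected_Ioi (mem_Ioi.2 one_pos))
  have hcont : ContinuousOn (fun x => φ₂ x ^ 2 * (x ^ k * exp (-x) / (x + k) ^ 2)) (Ioi 0) :=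
    (hφ_cont.pow 2).mul <| ((continuousOn_id.rpow_const fun x hx => Or.inl (ne_of_gt hx)).mul
      (by fun_prop)).div (by fun_prop) fun x (hx : 0 < x) => by positivity
  have hdom : IntegrableOn (fun x : ℝ => ((k + 1) * exp 1 / k ^ 2) ^ 2 * x ^ (-k)) (Ioc 0 1) :=
    (intervalIntegrable_iff_integrableOn_Ioc_of_le zero_le_one).1
      ((intervalIntegral.intervalIntegrable_rpow' (by linarith)).const_mul _)
  refine hdom.mono' ((hcont.mono Ioc_subset_Ioi_self).aestronglyMeasurable measurableSet_Ioc) ?_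
  filter_upwards [ae_restrict_mem measurableSet_Ioc] with x ⟨hx, hx1⟩
  rw [norm_of_nonneg (by positivity), hφ]
  exact laguerrePhi2_sq_mul_weight_le hk hx hx1
end

section
/- Let k ≥ 1 and φ₂(x) = (x+k+1) · ∫₁^x (t+k)² e^t / ((t+k+1)² t^{k+1}) dt. Then φ₂ does not belong to L²((0,1]; w_k); that is, ∫₀^1 φ₂(x)² · x^k e^{-x}/(x+k)² dx = ∞. (Consequently not every solution is square integrable against w_k near 0, i.e. the endpoint 0 is in the limit-point case.) -/
/-!
On `(0, 1]` the integrand of `φ₂` is at least `t ^ (-(k+1)) / 4`, so `|φ₂ x| ≳ x ^ (-k) / k` and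
`φ₂² w_k ≳ x ^ (-2k) · x ^ k = x ^ (-k)`, which is not integrable at `0` since `k ≥ 1`.
-/

open Real Set MeasureTheory intervalIntegral

theorem lintegral_Ioo_const_mul_rpow_eq_top {c s a : ℝ} (hc : 0 < c) (hs : s ≤ -1) (ha : 0 < a) :
    ∫⁻ x in Ioo 0 a, ENNReal.ofReal (c * x ^ s) = ⊤ := by
  have h_rpow : ∫⁻ x in Ioo 0 a, ENNReal.ofReal (x ^ s) = ⊤ := by
    by_contra h
    have h_nonneg : 0 ≤ᵐ[volume.restrict (Ioo 0 a)] fun x : ℝ ↦ x ^ s := by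
      filter_upwards [ae_restrict_mem measurableSet_Ioo] with x hx using rpow_nonneg hx.1.le s
    have h_int := (lintegral_ofReal_ne_top_iff_integrable
      (measurable_id.pow_const s).aestronglyMeasurable h_nonneg).mp h
    exact absurd ((integrableOn_Ioo_rpow_iff ha).mp h_int) hs.not_gt
  simp_rw [ENNReal.ofReal_mul hc.le]
  rw [lintegral_const_mul' _ _ ENNReal.ofReal_ne_top, h_rpow,
    ENNReal.mul_top (ENNReal.ofReal_pos.mpr hc).ne']

noncomputable def secondSolutionIntegrand (k t : ℝ) : ℝ :=
  (t + k) ^ 2 * exp t / ((t + k + 1) ^ 2 * t ^ (k + 1))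

theorem continuousOn_secondSolutionIntegrand {k : ℝ} (hk : 0 ≤ k) :
    ContinuousOn (secondSolutionIntegrand k) (Ioi 0) := by
  intro t ht
  have ht : 0 < t := ht
  have : 0 < t + k + 1 := by linarith
  have : 0 < t ^ (k + 1) := rpow_pos_of_pos ht _
  unfold secondSolutionIntegrand
  exact (ContinuousAt.div (by fun_prop) (by fun_prop (disch := positivity))
    (by positivity)).continuousWithinAt

theorem rpow_neg_div_four_le_secondSolutionIntegrand {k t : ℝ} (ht : 0 < t) (htk : 1 ≤ t + k) :
    t ^ (-(k + 1)) / 4 ≤ secondSolutionIntegrand k t := by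
  have h_pow : 0 < t ^ (k + 1) := rpow_pos_of_pos ht _
  unfold secondSolutionIntegrand
  rw [le_div_iff₀ (by positivity), rpow_neg ht.le,
    show (t ^ (k + 1))⁻¹ / 4 * ((t + k + 1) ^ 2 * t ^ (k + 1)) = (t + k + 1) ^ 2 / 4 by
      field_simp]
  -- `t + k ≥ 1` gives `(t + k + 1)² ≤ 4 (t + k)²`, and `exp t ≥ 1`
  nlinarith [one_le_exp ht.le, sq_nonneg (t + k)]

theorem rpow_neg_sub_one_div_le_integral_secondSolutionIntegrand {k x : ℝ} (hk : 0 < k)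
    (hx0 : 0 < x) (hx1 : x ≤ 1) (hxk : 1 ≤ x + k) :
    (x ^ (-k) - 1) / (4 * k) ≤ ∫ t in x..1, secondSolutionIntegrand k t := by
  have h_zero : (0 : ℝ) ∉ uIcc x 1 := by
    rw [uIcc_of_le hx1]; exact fun h ↦ hx0.not_ge h.1
  calc (x ^ (-k) - 1) / (4 * k) = ∫ t in x..1, t ^ (-(k + 1)) / 4 := by
        rw [intervalIntegral.integral_div,
          integral_rpow (Or.inr ⟨by intro h; linarith, h_zero⟩)]
        rw [show -(k + 1) + 1 = -k by ring, one_rpow]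
        field_simp
        ring
    _ ≤ ∫ t in x..1, secondSolutionIntegrand k t := by
        refine integral_mono_on hx1 ((intervalIntegrable_rpow (Or.inr h_zero)).div_const _)
          ((continuousOn_secondSolutionIntegrand hk.le).mono ?_).intervalIntegrable
          fun t ht ↦ rpow_neg_div_four_le_secondSolutionIntegrand (hx0.trans_le ht.1)
            (by linarith [ht.1])
        rw [uIcc_of_le hx1]
        exact fun t ht ↦ hx0.trans_le ht.1

theorem exp_neg_one_div_mul_rpow_neg_le_sq_mul_weight {k x : ℝ} (hk : 1 ≤ k) (hx0 : 0 < x)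
    (hx : x ≤ 1 / 2) :
    exp (-1) / (64 * k ^ 2) * x ^ (-k) ≤
      ((x + k + 1) * ∫ t in (1 : ℝ)..x, secondSolutionIntegrand k t) ^ 2 *
        (x ^ k * exp (-x) / (x + k) ^ 2) := by
  set I := ∫ t in x..1, secondSolutionIntegrand k t
  have h_two : 2 ≤ x ^ (-k) :=
    calc (2 : ℝ) ≤ x ^ (-1 : ℝ) := by
          rw [rpow_neg_one, le_inv_comm₀ two_pos hx0]; linarith
      _ ≤ x ^ (-k) := rpow_le_rpow_of_exponent_ge hx0 (by linarith) (by linarith)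
  have hI : x ^ (-k) / (8 * k) ≤ I :=
    calc x ^ (-k) / (8 * k) ≤ (x ^ (-k) - 1) / (4 * k) := by
          rw [div_le_div_iff₀ (by positivity) (by positivity)]; nlinarith
      _ ≤ I := rpow_neg_sub_one_div_le_integral_secondSolutionIntegrand (by linarith) hx0
          (by linarith) (by linarith)
  rw [integral_symm]
  calc exp (-1) / (64 * k ^ 2) * x ^ (-k)
        = (x ^ (-k) / (8 * k)) ^ 2 * (x ^ k * exp (-1)) := by
          rw [rpow_neg hx0.le]; field_simp; norm_num
    _ ≤ I ^ 2 * (x ^ k * exp (-x)) := by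
          gcongr
          linarith
    _ ≤ (x + k + 1) ^ 2 / (x + k) ^ 2 * (I ^ 2 * (x ^ k * exp (-x))) := by
          refine le_mul_of_one_le_left (by positivity) ?_
          rw [one_le_div (by positivity)]
          nlinarith
    _ = ((x + k + 1) * -I) ^ 2 * (x ^ k * exp (-x) / (x + k) ^ 2) := by
          field_simp

/-- For `k ≥ 1`, the second solution
`φ₂(x) = (x+k+1) · ∫₁^x (t+k)² e^t / ((t+k+1)² t^(k+1)) dt` is not in
`L²((0,1]; w_k)` with `w_k(x) = x^k e^(-x)/(x+k)^2`; that is,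
`∫₀^1 φ₂(x)² · x^k e^(-x)/(x+k)² dx = ∞` (the limit-point case at `0`). -/
theorem x1_laguerre_phi2_not_L2_at_zero (k : ℝ) (hk : 1 ≤ k)
    (φ₂ : ℝ → ℝ)
    (hφ₂ : ∀ x : ℝ, φ₂ x = (x + k + 1) *
      ∫ t in (1 : ℝ)..x, (t + k) ^ 2 * Real.exp t / ((t + k + 1) ^ 2 * t ^ (k + 1))) :
    ∫⁻ x in Set.Ioc (0 : ℝ) 1,
      ENNReal.ofReal (φ₂ x ^ 2 * (x ^ k * Real.exp (-x) / (x + k) ^ 2)) = ⊤ := by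
  refine eq_top_iff.mpr ?_
  calc ⊤ = ∫⁻ x in Ioo 0 (1 / 2), ENNReal.ofReal (exp (-1) / (64 * k ^ 2) * x ^ (-k)) :=
        (lintegral_Ioo_const_mul_rpow_eq_top (by positivity) (by linarith) (by norm_num)).symm
    _ ≤ ∫⁻ x in Ioo 0 (1 / 2),
          ENNReal.ofReal (φ₂ x ^ 2 * (x ^ k * exp (-x) / (x + k) ^ 2)) := by
        refine setLIntegral_mono' measurableSet_Ioo fun x hx ↦ ENNReal.ofReal_le_ofReal ?_
        rw [hφ₂]
        exact exp_neg_one_div_mul_rpow_neg_le_sq_mul_weight hk hx.1 hx.2.le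
    _ ≤ _ := lintegral_mono_set (Ioo_subset_Ioc_self.trans (Ioc_subset_Ioc_right (by norm_num)))
end

section
/- Let k > 0 and φ₂(x) = (x+k+1) · ∫₁^x (t+k)² e^t / ((t+k+1)² t^{k+1}) dt. Then as x → 0⁺ one has the asymptotic behaviour x^k · φ₂(x) → -k/(k+1); in particular φ₂(x) ~ -(k/(k+1)) x^{-k} near the endpoint 0. -/
/-!
Write the integrand as `g t / t ^ (k + 1)` with `g t = (t + k)² eᵗ / (t + k + 1)²`, continuous on
`[0, 1]` with `g 0 = k² / (k + 1)²`. The substitution `t = x u` turns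
`x ^ k * ∫ t in x..1, g t / t ^ (k + 1)` into `∫ u in 1..x⁻¹, g (x u) / u ^ (k + 1)`, and dominated
convergence (with dominating function `sup |g| / u ^ (k + 1)` on `(1, ∞)`) sends this to
`g 0 * ∫ u in Ioi 1, u ^ (-(k + 1)) = g 0 / k`. Multiplying by `-(x + k + 1) → -(k + 1)` gives
`-(k / (k + 1))`.
-/

open Real Set MeasureTheory intervalIntegral Filter
open Topology

theorem rpow_mul_integral_div_rpow_eq_integral_comp_mul {x : ℝ} (hx : 0 < x) (k : ℝ) (g : ℝ → ℝ) :
    x ^ k * ∫ t in x..1, g t / t ^ (k + 1) = ∫ u in (1 : ℝ)..x⁻¹, g (x * u) / u ^ (k + 1) := by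
  have hpoint : EqOn (fun u => g (x * u) / u ^ (k + 1))
      (fun u => x ^ (k + 1) * (g (x * u) / (x * u) ^ (k + 1))) (uIcc 1 x⁻¹) := by
    intro u hu
    have hu0 : 0 < u := (lt_min one_pos (inv_pos.2 hx)).trans_le hu.1
    simp only [mul_rpow hx.le hu0.le]
    field_simp
  rw [integral_congr hpoint, intervalIntegral.integral_const_mul,
    integral_comp_mul_left (fun t => g t / t ^ (k + 1)) hx.ne', mul_one,
    mul_inv_cancel₀ hx.ne', smul_eq_mul, ← mul_assoc, rpow_add_one hx.ne',
    mul_inv_cancel_right₀ hx.ne']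

theorem tendsto_integral_comp_mul_div_rpow {k : ℝ} {g : ℝ → ℝ} (hk : 0 < k)
    (hg : ContinuousOn g (Icc 0 1)) :
    Tendsto (fun x => ∫ u in (1 : ℝ)..x⁻¹, g (x * u) / u ^ (k + 1)) (𝓝[>] 0) (𝓝 (g 0 / k)) := by
  obtain ⟨M, hM⟩ := isCompact_Icc.exists_bound_of_continuousOn hg
  have hM0 : 0 ≤ M := (norm_nonneg _).trans (hM 0 (left_mem_Icc.2 zero_le_one))
  have hmaps : ∀ x u : ℝ, 0 < x → 1 < u → u ∈ Iic x⁻¹ → x * u ∈ Icc 0 1 := fun x u hx hu hux =>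
    ⟨by positivity, (le_inv_mul_iff₀ hx).1 ((mul_one x⁻¹).symm ▸ hux)⟩
  have hsmall : ∀ᶠ x in 𝓝[>] (0 : ℝ), x ∈ Ioo 0 1 := Ioo_mem_nhdsGT one_pos
  have hindicator : ∀ᶠ x in 𝓝[>] (0 : ℝ), ∫ u in (1 : ℝ)..x⁻¹, g (x * u) / u ^ (k + 1) =
      ∫ u in Ioi 1, (Iic x⁻¹).indicator (fun u => g (x * u) / u ^ (k + 1)) u := by
    filter_upwards [hsmall] with x hx
    rw [integral_of_le (one_le_inv₀ hx.1 |>.2 hx.2.le), setIntegral_indicator measurableSet_Iic,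
      Ioi_inter_Iic]
  have hlimit : ∫ u in Ioi (1 : ℝ), g 0 / u ^ (k + 1) = g 0 / k := by
    have hrpow : EqOn (fun u : ℝ => g 0 / u ^ (k + 1)) (fun u => g 0 * u ^ (-(k + 1))) (Ioi 1) :=
      fun u hu => by simp only [rpow_neg (zero_le_one.trans hu.out.le), div_eq_mul_inv]
    rw [setIntegral_congr_fun measurableSet_Ioi hrpow, MeasureTheory.integral_const_mul,
      integral_Ioi_rpow_of_lt (by linarith) one_pos, one_rpow, show -(k + 1) + 1 = -k by ring]
    field_simp
  rw [← hlimit]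
  refine (MeasureTheory.tendsto_integral_filter_of_dominated_convergence
    (fun u => M * u ^ (-(k + 1))) ?_ ?_ ?_ ?_).congr' (hindicator.mono fun _ h => h.symm)
  · filter_upwards [hsmall] with x hx
    rw [aestronglyMeasurable_indicator_iff measurableSet_Iic,
      Measure.restrict_restrict measurableSet_Iic]
    refine ContinuousOn.aestronglyMeasurable ?_ (measurableSet_Iic.inter measurableSet_Ioi)
    refine (hg.comp (continuousOn_const.mul continuousOn_id)
      fun u hu => hmaps _ _ hx.1 hu.2 hu.1).div
      (continuousOn_id.rpow_const fun u hu => Or.inr (by linarith)) fun u hu => ?_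
    exact (rpow_pos_of_pos (zero_lt_one.trans hu.2.out) _).ne'
  · filter_upwards [hsmall] with x hx
    refine ae_restrict_of_forall_mem measurableSet_Ioi fun u hu => ?_
    have hu0 : 0 < u := zero_lt_one.trans hu.out
    by_cases hux : u ∈ Iic x⁻¹
    · rw [indicator_of_mem hux, norm_div, rpow_neg hu0.le, ← div_eq_mul_inv,
        Real.norm_of_nonneg (rpow_nonneg hu0.le _)]
      exact div_le_div_of_nonneg_right (hM _ (hmaps _ _ hx.1 hu hux)) (rpow_nonneg hu0.le _)
    · rw [indicator_of_notMem hux, norm_zero]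
      exact mul_nonneg hM0 (rpow_nonneg hu0.le _)
  · exact (integrableOn_Ioi_rpow_of_lt (by linarith) one_pos).const_mul M
  · refine ae_restrict_of_forall_mem measurableSet_Ioi fun u hu => ?_
    have hu0 : 0 < u := zero_lt_one.trans hu.out
    have hclose : ∀ᶠ x in 𝓝[>] (0 : ℝ), x ∈ Ioo 0 u⁻¹ := Ioo_mem_nhdsGT (inv_pos.2 hu0)
    have hmul : Tendsto (fun x => x * u) (𝓝[>] 0) (𝓝[Icc 0 1] 0) := by
      refine tendsto_nhdsWithin_iff.2 ⟨?_, ?_⟩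
      · simpa using ((continuous_mul_const u).tendsto 0).mono_left nhdsWithin_le_nhds
      · filter_upwards [hclose] with x hx
        exact hmaps _ _ hx.1 hu ((le_inv_comm₀ hx.1 hu0).1 hx.2.le)
    refine (((hg 0 (left_mem_Icc.2 zero_le_one)).tendsto.comp hmul).div_const _).congr' ?_
    filter_upwards [hclose] with x hx
    rw [indicator_of_mem (show u ∈ Iic x⁻¹ from (le_inv_comm₀ hx.1 hu0).1 hx.2.le)]
    rfl

theorem tendsto_rpow_mul_integral_div_rpow {k : ℝ} {g : ℝ → ℝ} (hk : 0 < k)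
    (hg : ContinuousOn g (Icc 0 1)) :
    Tendsto (fun x => x ^ k * ∫ t in x..1, g t / t ^ (k + 1)) (𝓝[>] 0) (𝓝 (g 0 / k)) :=
  (tendsto_integral_comp_mul_div_rpow hk hg).congr' <| eventually_mem_nhdsWithin.mono
    fun _ hx => (rpow_mul_integral_div_rpow_eq_integral_comp_mul hx k g).symm

/-- For `k > 0`, the second solution
`φ₂(x) = (x+k+1) · ∫₁^x (t+k)² e^t / ((t+k+1)² t^(k+1)) dt` satisfies
`x^k · φ₂(x) → -k/(k+1)` as `x → 0⁺`; that is, `φ₂(x) ~ -(k/(k+1)) x^(-k)`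
near the endpoint `0`. -/
theorem x1_laguerre_phi2_asymptotics_at_zero (k : ℝ) (hk : 0 < k)
    (φ₂ : ℝ → ℝ)
    (hφ₂ : ∀ x : ℝ, φ₂ x = (x + k + 1) *
      ∫ t in (1 : ℝ)..x, (t + k) ^ 2 * Real.exp t / ((t + k + 1) ^ 2 * t ^ (k + 1))) :
    Filter.Tendsto (fun x : ℝ => x ^ k * φ₂ x)
      (nhdsWithin 0 (Set.Ioi (0 : ℝ))) (nhds (-(k / (k + 1)))) := by
  set g : ℝ → ℝ := fun t => (t + k) ^ 2 * Real.exp t / (t + k + 1) ^ 2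
  have hg : ContinuousOn g (Icc 0 1) :=
    ContinuousOn.div (by fun_prop) (by fun_prop) fun t ht => pow_ne_zero 2 (by linarith [ht.1])
  have hφ₂_eq : ∀ x, x ^ k * φ₂ x = -((x + k + 1) * (x ^ k * ∫ t in x..1, g t / t ^ (k + 1))) := by
    intro x
    simp only [hφ₂, g, div_mul_eq_div_div, integral_symm x 1]
    ring
  have hlin : Tendsto (fun x : ℝ => x + k + 1) (𝓝[>] 0) (𝓝 (k + 1)) :=
    tendsto_nhdsWithin_of_tendsto_nhds ((by fun_prop : Continuous _).tendsto' 0 _ (by ring))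
  have hval : -((k + 1) * (g 0 / k)) = -(k / (k + 1)) := by
    simp only [g, zero_add, Real.exp_zero, mul_one]
    field_simp
  rw [← hval, funext hφ₂_eq]
  exact (hlin.mul (tendsto_rpow_mul_integral_div_rpow hk hg)).neg
end

section
/- Let k > 0 and φ₂(x) = (x+k+1) · ∫₁^x (t+k)² e^t / ((t+k+1)² t^{k+1}) dt. Then as x → +∞ one has the asymptotic behaviour x^k e^{-x} · φ₂(x) → 1; in particular φ₂(x) ~ e^x x^{-k} as x → ∞. -/
open Real Set MeasureTheory intervalIntegral Filter

/-!
Put `h(t) = e^t / ((t + k + 1) t^k)`. The integrand is `h'(t) + r(t)` with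
`0 ≤ r(t) ≤ 3k e^t / t^(k+2)`, and `x^k e^(-x) (x + k + 1) h(x) = 1`. So it suffices that the
weight `x^k e^(-x) (x + k + 1)` kills the constant `h(1)` and `∫₁^x r`; the latter is
`O(e^x / x^(k+2))`, because `∫₁^x e^t t^(-s) dt = O(e^x x^(-s))` for `s ≥ 0`
(split the integral at `x / 2`).
-/

open Asymptotics Topology

theorem ContinuousOn.intervalIntegrable_of_Ioi {u : ℝ → ℝ} {c a b : ℝ}
    (hu : ContinuousOn u (Ioi c)) (ha : c < a) (hb : c < b) : IntervalIntegrable u volume a b :=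
  (hu.mono fun _ ht => (lt_min ha hb).trans_le ht.1).intervalIntegrable

section ExpDivRpow

variable {s : ℝ}

theorem continuousOn_exp_div_rpow : ContinuousOn (fun t => exp t / t ^ s) (Ioi 0) :=
  continuous_exp.continuousOn.div (continuousOn_id.rpow_const fun _ ht => Or.inl (ne_of_gt ht))
    fun _ ht => (rpow_pos_of_pos ht s).ne'

theorem integral_exp_div_rpow_le (hs : 0 ≤ s) {a b : ℝ} (ha : 0 < a) (hab : a ≤ b) :
    ∫ t in a..b, exp t / t ^ s ≤ exp b / a ^ s := by
  calc ∫ t in a..b, exp t / t ^ s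
      ≤ ∫ t in a..b, exp t / a ^ s := by
        refine integral_mono_on hab
          (continuousOn_exp_div_rpow.intervalIntegrable_of_Ioi ha (ha.trans_le hab))
          ((continuous_exp.div_const _).intervalIntegrable a b) fun t ht => ?_
        gcongr
        exact ht.1
    _ = (exp b - exp a) / a ^ s := by rw [intervalIntegral.integral_div, integral_exp]
    _ ≤ exp b / a ^ s := by gcongr; linarith [exp_pos a]

theorem integral_exp_div_rpow_isBigO (hs : 0 ≤ s) :
    (fun x => ∫ t in (1 : ℝ)..x, exp t / t ^ s) =O[atTop] fun x => exp x / x ^ s := by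
  have hsmall : ∀ᶠ x in atTop, exp (x / 2) ≤ exp x / x ^ s := by
    filter_upwards [(tendsto_rpow_mul_exp_neg_mul_atTop_nhds_zero s (1 / 2) one_half_pos).eventually
      (ge_mem_nhds one_pos), eventually_gt_atTop 0] with x hx hx0
    rw [le_div_iff₀ (rpow_pos_of_pos hx0 s)]
    calc exp (x / 2) * x ^ s = exp x * (x ^ s * exp (-(1 / 2) * x)) := by
          rw [mul_left_comm, ← exp_add]; ring_nf
      _ ≤ exp x := mul_le_of_le_one_right (exp_pos x).le hx
  refine IsBigO.of_bound (1 + 2 ^ s) ?_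
  filter_upwards [hsmall, eventually_ge_atTop 2] with x hsmall hx
  have hint := continuousOn_exp_div_rpow (s := s)
  rw [← integral_add_adjacent_intervals (b := x / 2)
    (hint.intervalIntegrable_of_Ioi one_pos (by linarith))
    (hint.intervalIntegrable_of_Ioi (by linarith) (by linarith))]
  have h1 := integral_exp_div_rpow_le hs one_pos (by linarith : (1 : ℝ) ≤ x / 2)
  have h2 := integral_exp_div_rpow_le hs (by linarith : (0 : ℝ) < x / 2) (by linarith : x / 2 ≤ x)
  rw [one_rpow, div_one] at h1
  rw [div_rpow (by linarith) zero_le_two, div_div_eq_mul_div, mul_div_right_comm] at h2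
  have hnonneg : ∀ a b, 1 ≤ a → a ≤ b → 0 ≤ ∫ t in a..b, exp t / t ^ s := fun a b ha hab =>
    integral_nonneg hab fun t ht => div_nonneg (exp_pos t).le (rpow_nonneg (by linarith [ht.1]) s)
  rw [norm_of_nonneg (add_nonneg (hnonneg 1 (x / 2) le_rfl (by linarith))
      (hnonneg (x / 2) x (by linarith) (by linarith))),
    norm_of_nonneg (div_nonneg (exp_pos x).le (rpow_nonneg (by linarith) s))]
  linarith

end ExpDivRpow

theorem tendsto_rpow_mul_exp_neg_mul_add_atTop (s c : ℝ) :
    Tendsto (fun x => x ^ s * exp (-x) * (x + c)) atTop (𝓝 0) := by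
  have h := (tendsto_rpow_mul_exp_neg_mul_atTop_nhds_zero (s + 1) 1 one_pos).add
    ((tendsto_rpow_mul_exp_neg_mul_atTop_nhds_zero s 1 one_pos).const_mul c)
  rw [mul_zero, add_zero] at h
  refine h.congr' ?_
  filter_upwards [eventually_gt_atTop 0] with x hx
  rw [rpow_add_one hx.ne', neg_mul, one_mul]
  ring

theorem tendsto_add_const_div_sq_atTop (c : ℝ) :
    Tendsto (fun x : ℝ => (x + c) / x ^ 2) atTop (𝓝 0) := by
  have h := (tendsto_const_nhds (x := (1 : ℝ)).add
    (tendsto_const_nhds (x := c).div_atTop tendsto_id)).mul tendsto_inv_atTop_zero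
  rw [mul_zero] at h
  refine h.congr' ?_
  filter_upwards [eventually_gt_atTop 0] with x hx
  simp only [id]
  field_simp

namespace LaguerrePhi2

noncomputable def integrand (k t : ℝ) : ℝ :=
  (t + k) ^ 2 * exp t / ((t + k + 1) ^ 2 * t ^ (k + 1))

noncomputable def leading (k t : ℝ) : ℝ := exp t / ((t + k + 1) * t ^ k)

noncomputable def remainder (k t : ℝ) : ℝ :=
  (2 * k * t + 2 * k ^ 2 + k) * exp t / ((t + k + 1) ^ 2 * t ^ (k + 1))

variable {k : ℝ}

theorem hasDerivAt_leading (hk : 0 ≤ k) {t : ℝ} (ht : 0 < t) :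
    HasDerivAt (leading k) (integrand k t - remainder k t) t := by
  have hkt : t + k + 1 ≠ 0 := by linarith
  have htk : t ^ k ≠ 0 := (rpow_pos_of_pos ht k).ne'
  have hden : HasDerivAt (fun t => (t + k + 1) * t ^ k)
      (1 * t ^ k + (t + k + 1) * (k * t ^ (k - 1))) t :=
    (((hasDerivAt_id t).add_const k).add_const 1).mul (hasDerivAt_rpow_const (Or.inl ht.ne'))
  refine ((hasDerivAt_exp t).div hden (mul_ne_zero hkt htk)).congr_deriv ?_
  unfold integrand remainder
  rw [rpow_sub ht, rpow_add ht, rpow_one]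
  field_simp
  ring

theorem continuousOn_mul_exp_div (hk : 0 ≤ k) {p : ℝ → ℝ} (hp : Continuous p) :
    ContinuousOn (fun t => p t * exp t / ((t + k + 1) ^ 2 * t ^ (k + 1))) (Ioi 0) := by
  have : Continuous fun t : ℝ => t ^ (k + 1) := continuous_rpow_const (by linarith)
  refine ContinuousOn.div (by fun_prop) (by fun_prop) fun t (ht : 0 < t) => ?_
  have := rpow_pos_of_pos ht (k + 1)
  positivity

theorem continuousOn_integrand (hk : 0 ≤ k) : ContinuousOn (integrand k) (Ioi 0) :=
  continuousOn_mul_exp_div hk (p := fun t => (t + k) ^ 2) (by fun_prop)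

theorem continuousOn_remainder (hk : 0 ≤ k) : ContinuousOn (remainder k) (Ioi 0) :=
  continuousOn_mul_exp_div hk (p := fun t => 2 * k * t + 2 * k ^ 2 + k) (by fun_prop)

theorem remainder_nonneg (hk : 0 ≤ k) {t : ℝ} (ht : 0 ≤ t) : 0 ≤ remainder k t := by
  unfold remainder
  have := rpow_nonneg ht (k + 1)
  positivity

theorem remainder_le (hk : 0 ≤ k) {t : ℝ} (ht : 0 < t) :
    remainder k t ≤ 3 * k * (exp t / t ^ (k + 2)) := by
  unfold remainder
  rw [show k + 2 = (k + 1) + 1 by ring, rpow_add_one ht.ne' (k + 1)]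
  have := rpow_pos_of_pos ht (k + 1)
  rw [mul_div_assoc', div_le_div_iff₀ (by positivity) (by positivity)]
  have key : (2 * k * t + 2 * k ^ 2 + k) * t ≤ 3 * k * (t + k + 1) ^ 2 := by nlinarith
  have hpos : 0 ≤ exp t * t ^ (k + 1) := by positivity
  linear_combination mul_le_mul_of_nonneg_right key hpos

theorem integral_integrand_eq (hk : 0 ≤ k) {a b : ℝ} (ha : 0 < a) (hb : 0 < b) :
    ∫ t in a..b, integrand k t = leading k b - leading k a + ∫ t in a..b, remainder k t := by
  have hf := (continuousOn_integrand hk).intervalIntegrable_of_Ioi ha hb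
  have hr := (continuousOn_remainder hk).intervalIntegrable_of_Ioi ha hb
  rw [← integral_eq_sub_of_hasDerivAt
    (fun t ht => hasDerivAt_leading hk ((lt_min ha hb).trans_le ht.1)) (hf.sub hr),
    integral_sub hf hr]
  ring

theorem rpow_mul_exp_neg_mul_leading (hk : 0 ≤ k) {x : ℝ} (hx : 0 < x) :
    x ^ k * exp (-x) * (x + k + 1) * leading k x = 1 := by
  have := rpow_pos_of_pos hx k
  have : x + k + 1 ≠ 0 := by linarith
  unfold leading
  rw [exp_neg]
  field_simp

theorem integral_remainder_isBigO (hk : 0 ≤ k) :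
    (fun x => ∫ t in (1 : ℝ)..x, remainder k t) =O[atTop] fun x => exp x / x ^ (k + 2) := by
  refine IsBigO.trans (IsBigO.of_bound (3 * k) ?_) (integral_exp_div_rpow_isBigO (by linarith))
  filter_upwards [eventually_ge_atTop 1] with x hx
  rw [norm_of_nonneg (integral_nonneg hx fun t ht => remainder_nonneg hk (by linarith [ht.1]))]
  calc ∫ t in (1 : ℝ)..x, remainder k t
      ≤ ∫ t in (1 : ℝ)..x, 3 * k * (exp t / t ^ (k + 2)) :=
        integral_mono_on hx
          ((continuousOn_remainder hk).intervalIntegrable_of_Ioi one_pos (by linarith))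
          ((continuousOn_exp_div_rpow.intervalIntegrable_of_Ioi one_pos (by linarith)).const_mul _)
          fun t ht => remainder_le hk (by linarith [ht.1])
    _ ≤ 3 * k * ‖∫ t in (1 : ℝ)..x, exp t / t ^ (k + 2)‖ := by
        rw [intervalIntegral.integral_const_mul]
        exact mul_le_mul_of_nonneg_left (le_norm_self _) (by linarith)

end LaguerrePhi2

open LaguerrePhi2 in
/-- For `k > 0`, the second solution
`φ₂(x) = (x+k+1) · ∫₁^x (t+k)² e^t / ((t+k+1)² t^(k+1)) dt` satisfies
`x^k e^(-x) · φ₂(x) → 1` as `x → +∞`; that is, `φ₂(x) ~ e^x x^(-k)` at `∞`. -/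
theorem x1_laguerre_phi2_asymptotics_at_infinity (k : ℝ) (hk : 0 < k)
    (φ₂ : ℝ → ℝ)
    (hφ₂ : ∀ x : ℝ, φ₂ x = (x + k + 1) *
      ∫ t in (1 : ℝ)..x, (t + k) ^ 2 * Real.exp t / ((t + k + 1) ^ 2 * t ^ (k + 1))) :
    Filter.Tendsto (fun x : ℝ => x ^ k * Real.exp (-x) * φ₂ x)
      Filter.atTop (nhds 1) := by
  have hweight : Tendsto (fun x => x ^ k * exp (-x) * (x + k + 1)) atTop (𝓝 0) := by
    simpa only [add_assoc] using tendsto_rpow_mul_exp_neg_mul_add_atTop k (k + 1)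
  have hrem : Tendsto (fun x => x ^ k * exp (-x) * (x + k + 1) * ∫ t in (1 : ℝ)..x, remainder k t)
      atTop (𝓝 0) := by
    refine ((isBigO_refl _ _).mul (integral_remainder_isBigO hk.le)).trans_tendsto ?_
    refine (tendsto_add_const_div_sq_atTop (k + 1)).congr' ?_
    filter_upwards [eventually_gt_atTop 0] with x hx
    rw [rpow_add hx, rpow_two, exp_neg]
    have := rpow_pos_of_pos hx k
    field_simp
    ring
  have hlim := ((tendsto_const_nhds (x := (1 : ℝ))).sub (hweight.mul_const (leading k 1))).add hrem
  rw [zero_mul, sub_zero, add_zero] at hlim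
  refine hlim.congr' ?_
  filter_upwards [eventually_gt_atTop 0] with x hx
  simp only [hφ₂, ← integrand.eq_1]
  rw [integral_integrand_eq hk.le one_pos hx]
  linear_combination (rpow_mul_exp_neg_mul_leading hk.le hx).symm
end
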